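/- Let $R$ be an irreducible simply-laced root system, $\alpha$ a simple root such that $\varpi_\alpha$ is minuscule, and $I = S \setminus \{\alpha\}$. Then the parabolic Weyl group $W_I$ acts transitively on the set $R^+ \setminus R^+_I$ of positive roots not supported on $I$. -/

import Mathlib

open scoped RealInnerProductSpace

noncomputable section

variable {V : Type} [NormedAddCommGroup V] [InnerProductSpace ℝ V]

/-- The reflection of `V` in the hyperplane orthogonal to `α`
(the identity map when `α = 0`). -/
def reflVec (α : V) : V ≃ₗ[ℝ] V where
  toFun x := x - (2 * ⟪x, α⟫ / ⟪α, α⟫) • α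
  invFun x := x - (2 * ⟪x, α⟫ / ⟪α, α⟫) • α
  map_add' x y := by
    try dsimp only
    have h : 2 * ⟪x + y, α⟫ / ⟪α, α⟫ = 2 * ⟪x, α⟫ / ⟪α, α⟫ + 2 * ⟪y, α⟫ / ⟪α, α⟫ := by
      rw [inner_add_left]; ring
    rw [h, add_smul]; abel
  map_smul' r x := by
    try dsimp only
    have h : 2 * ⟪r • x, α⟫ / ⟪α, α⟫ = r * (2 * ⟪x, α⟫ / ⟪α, α⟫) := by
      rw [real_inner_smul_left]; ring
    try simp only [RingHom.id_apply]
    rw [h, mul_smul, smul_sub]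
  left_inv x := by
    dsimp only
    by_cases h : (⟪α, α⟫ : ℝ) = 0
    · simp [inner_self_eq_zero.mp h]
    · have h2 : 2 * ⟪x - (2 * ⟪x, α⟫ / ⟪α, α⟫) • α, α⟫ / ⟪α, α⟫
          = -(2 * ⟪x, α⟫ / ⟪α, α⟫) := by
        rw [inner_sub_left, real_inner_smul_left]
        field_simp
        ring
      rw [h2, neg_smul, sub_neg_eq_add, sub_add_cancel]
  right_inv x := by
    dsimp only
    by_cases h : (⟪α, α⟫ : ℝ) = 0
    · simp [inner_self_eq_zero.mp h]
    · have h2 : 2 * ⟪x - (2 * ⟪x, α⟫ / ⟪α, α⟫) • α, α⟫ / ⟪α, α⟫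
          = -(2 * ⟪x, α⟫ / ⟪α, α⟫) := by
        rw [inner_sub_left, real_inner_smul_left]
        field_simp
        ring
      rw [h2, neg_smul, sub_neg_eq_add, sub_add_cancel]

/-- The pairing `⟨x, y^∨⟩ = 2(x,y)/(y,y)` of a vector with the coroot of `y`. -/
def cpair (x y : V) : ℝ := 2 * ⟪x, y⟫ / ⟪y, y⟫

/-- A (reduced, crystallographic) root system in a real inner product space,
together with a chosen system of simple roots. -/
structure RootSystemData (V : Type) [NormedAddCommGroup V] [InnerProductSpace ℝ V] where
  roots : Finset V
  simples : Finset V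
  simples_subset : simples ⊆ roots
  root_ne_zero : ∀ α ∈ roots, α ≠ 0
  pairing_int : ∀ α ∈ roots, ∀ β ∈ roots, ∃ n : ℤ, (n : ℝ) = cpair α β
  reflect_mem : ∀ α ∈ roots, ∀ β ∈ roots, reflVec α β ∈ roots
  reduced : ∀ α ∈ roots, ∀ t : ℝ, t • α ∈ roots → t = 1 ∨ t = -1
  simples_indep : LinearIndependent ℝ (fun a : {x // x ∈ simples} => (a : V))
  root_pos_or_neg : ∀ β ∈ roots,
    (∃ c : V → ℕ, β = ∑ α ∈ simples, (c α : ℝ) • α) ∨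
    (∃ c : V → ℕ, -β = ∑ α ∈ simples, (c α : ℝ) • α)

namespace RootSystemData

/-- `v` is a non-negative integer combination of the elements of `I`. -/
def IsPosCombOf (P : RootSystemData V) (I : Finset V) (v : V) : Prop :=
  ∃ c : V → ℕ, v = ∑ α ∈ I, (c α : ℝ) • α

/-- `v` is a non-negative integer combination of the simple roots. -/
def IsPosComb (P : RootSystemData V) (v : V) : Prop := P.IsPosCombOf P.simples v

/-- The set of positive roots. -/
def Pos (P : RootSystemData V) : Set V := {β | β ∈ P.roots ∧ P.IsPosComb β}

/-- The set of negative roots. -/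
def Neg (P : RootSystemData V) : Set V := {β | -β ∈ P.Pos}

/-- The positive roots lying in the root subsystem generated by `I`. -/
def PosOf (P : RootSystemData V) (I : Finset V) : Set V := {β | β ∈ P.roots ∧ P.IsPosCombOf I β}

/-- The half sum of the positive roots. -/
def rho (P : RootSystemData V) : V := (2 : ℝ)⁻¹ • ∑ᶠ β ∈ P.Pos, β

/-- The half sum of the positive roots in the root subsystem generated by `I`. -/
def rhoOf (P : RootSystemData V) (I : Finset V) : V := (2 : ℝ)⁻¹ • ∑ᶠ β ∈ P.PosOf I, β

/-- The parabolic subgroup of the Weyl group generated by the reflections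
in the elements of `I`. -/
def WeylOf (P : RootSystemData V) (I : Finset V) : Subgroup (V ≃ₗ[ℝ] V) :=
  Subgroup.closure (reflVec '' (I : Set V))

/-- The Weyl group, generated by the simple reflections. -/
def Weyl (P : RootSystemData V) : Subgroup (V ≃ₗ[ℝ] V) := P.WeylOf P.simples

/-- `l` is a word with letters in `I` whose associated product of reflections is `w`. -/
def IsWordOf (P : RootSystemData V) (I : Finset V) (l : List V) (w : V ≃ₗ[ℝ] V) : Prop :=
  (∀ α ∈ l, α ∈ I) ∧ (l.map reflVec).prod = w

/-- The length of `w` with respect to the reflections in the elements of `I`. -/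
def lengthOf (P : RootSystemData V) (I : Finset V) (w : V ≃ₗ[ℝ] V) : ℕ :=
  sInf {n | ∃ l, P.IsWordOf I l w ∧ l.length = n}

/-- The Coxeter length of `w` with respect to the simple reflections. -/
def length (P : RootSystemData V) (w : V ≃ₗ[ℝ] V) : ℕ := P.lengthOf P.simples w

/-- `l` is a reduced decomposition of `w` into simple reflections. -/
def IsReducedWord (P : RootSystemData V) (l : List V) (w : V ≃ₗ[ℝ] V) : Prop :=
  P.IsWordOf P.simples l w ∧ l.length = P.length w

/-- The partial order on the root lattice: `x ≤ y` iff `y - x` is a non-negative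
integer combination of simple roots. -/
def rootLE (P : RootSystemData V) (x y : V) : Prop := P.IsPosComb (y - x)

/-- The root system is simply laced: all roots have the same length. -/
def SimplyLaced (P : RootSystemData V) : Prop := ∀ α ∈ P.roots, ∀ β ∈ P.roots, ⟪α, α⟫ = ⟪β, β⟫

/-- The root system is irreducible: it admits no decomposition into two
non-empty mutually orthogonal parts. -/
def Irred (P : RootSystemData V) : Prop :=
  ∀ A B : Set V, (P.roots : Set V) ⊆ A ∪ B →
    (∀ a ∈ A ∩ (P.roots : Set V), ∀ b ∈ B ∩ (P.roots : Set V), ⟪a, b⟫ = 0) →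
    A ∩ (P.roots : Set V) = ∅ ∨ B ∩ (P.roots : Set V) = ∅

/-- `ϖ` is the fundamental weight associated with the simple root `α`. -/
def IsFundamentalWeight (P : RootSystemData V) (α ϖ : V) : Prop :=
  cpair ϖ α = 1 ∧ ∀ γ ∈ P.simples, γ ≠ α → cpair ϖ γ = 0

/-- The weight `ϖ` is minuscule: it pairs with every positive coroot by at most `1`. -/
def IsMinusculeWeight (P : RootSystemData V) (ϖ : V) : Prop := ∀ β ∈ P.Pos, cpair ϖ β ≤ 1

/-- The support of `w`: the set of simple roots whose reflections occur in a
reduced decomposition of `w`. -/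
def Supp (P : RootSystemData V) (w : V ≃ₗ[ℝ] V) : Set V :=
  {δ | δ ∈ P.simples ∧ ∃ l, P.IsReducedWord l w ∧ δ ∈ l}

end RootSystemData

/-!
A positive root `β` outside `R⁺_I` has `α`-coefficient `⟨ϖ_α, β^∨⟩`, since all roots have the
same length; minusculity forces this coefficient to be `1`. Every such `β ≠ α` is moved to `α`
by `W_I`, lowering its height at each step: writing `β = α + ∑_{μ ∈ I} c_μ μ`, the estimate
`(β, α) < (β, β)` (equal lengths, `β ≠ α`) shows that `(β, μ) > 0` for some `μ ∈ I`, and then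
`s_μ β = β - μ` is again a positive root with `α`-coefficient `1`.
-/

theorem real_inner_lt_inner_self_of_ne {x y : V} (hxy : x ≠ y) (hlen : ⟪x, x⟫ = ⟪y, y⟫) :
    ⟪x, y⟫ < ⟪y, y⟫ := by
  have hpos : 0 < ‖x - y‖ ^ 2 := by positivity [sub_ne_zero.mpr hxy]
  rw [norm_sub_sq_real, ← real_inner_self_eq_norm_sq, ← real_inner_self_eq_norm_sq] at hpos
  linarith

theorem cpair_eq_zero_iff {x y : V} : cpair x y = 0 ↔ ⟪x, y⟫ = 0 := by
  by_cases hy : y = 0 <;> simp [cpair, hy]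

theorem reflVec_apply (μ x : V) : reflVec μ x = x - cpair x μ • μ := rfl

namespace RootSystemData

variable (P : RootSystemData V)

theorem eq_of_sum_smul_eq {f g : V → ℝ}
    (h : ∑ δ ∈ P.simples, f δ • δ = ∑ δ ∈ P.simples, g δ • δ) :
    ∀ δ ∈ P.simples, f δ = g δ := by
  have hzero : ∑ δ : P.simples, (f δ - g δ) • (δ : V) = 0 := by
    rw [Finset.sum_coe_sort P.simples (fun δ => (f δ - g δ) • δ)]
    simp only [sub_smul, Finset.sum_sub_distrib, h, sub_self]
  intro δ hδ
  exact sub_eq_zero.mp (Fintype.linearIndependent_iff.mp P.simples_indep _ hzero ⟨δ, hδ⟩)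

theorem sum_smul_ne_of_mem_simples {μ δ₀ : V} (hμ : μ ∈ P.simples) (hδ₀ : δ₀ ∈ P.simples)
    (hne : δ₀ ≠ μ) (f : V → ℝ) (hf : f δ₀ ≠ 0) : ∑ δ ∈ P.simples, f δ • δ ≠ μ := by
  classical
  intro h
  have hμ_sum : μ = ∑ δ ∈ P.simples, (if δ = μ then (1 : ℝ) else 0) • δ := by
    simp [ite_smul, hμ]
  simpa [hne, hf] using P.eq_of_sum_smul_eq (h.trans hμ_sum) δ₀ hδ₀

theorem exists_nat_coeffs_of_mem_roots {β : V} (hβ : β ∈ P.roots) {f : V → ℝ}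
    (hf : β = ∑ δ ∈ P.simples, f δ • δ) (hpos : ∃ δ ∈ P.simples, 0 < f δ) :
    ∃ d : V → ℕ, ∀ δ ∈ P.simples, (d δ : ℝ) = f δ := by
  rcases P.root_pos_or_neg β hβ with ⟨d, hd⟩ | ⟨d, hd⟩
  · exact ⟨d, P.eq_of_sum_smul_eq (hd.symm.trans hf)⟩
  · obtain ⟨δ, hδ, hfδ⟩ := hpos
    have hsum : ∑ δ ∈ P.simples, (-(d δ : ℝ)) • δ = ∑ δ ∈ P.simples, f δ • δ := by
      simp only [neg_smul, Finset.sum_neg_distrib, ← hd, neg_neg, hf]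
    have hfd := P.eq_of_sum_smul_eq hsum δ hδ
    have : (0 : ℝ) ≤ d δ := Nat.cast_nonneg _
    linarith

theorem exists_coeffs_sub_simple {μ δ₀ : V} (hμ : μ ∈ P.simples)
    (hδ₀ : δ₀ ∈ P.simples) (hne : δ₀ ≠ μ) (c : V → ℕ) (hc : 0 < c δ₀)
    (hroot : ∑ δ ∈ P.simples, (c δ : ℝ) • δ - μ ∈ P.roots) :
    ∃ d : V → ℕ, ∑ δ ∈ P.simples, (c δ : ℝ) • δ - μ = ∑ δ ∈ P.simples, (d δ : ℝ) • δ ∧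
      (∀ δ ∈ P.simples, δ ≠ μ → d δ = c δ) ∧
      ∑ δ ∈ P.simples, d δ + 1 = ∑ δ ∈ P.simples, c δ := by
  classical
  set f : V → ℝ := fun δ => (c δ : ℝ) - if δ = μ then 1 else 0
  have hf : ∑ δ ∈ P.simples, (c δ : ℝ) • δ - μ = ∑ δ ∈ P.simples, f δ • δ := by
    simp [f, sub_smul, Finset.sum_sub_distrib, ite_smul, hμ]
  obtain ⟨d, hd⟩ := P.exists_nat_coeffs_of_mem_roots hroot hf
    ⟨δ₀, hδ₀, by simpa [f, hne] using hc⟩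
  refine ⟨d, hf.trans (Finset.sum_congr rfl fun δ hδ => by rw [hd δ hδ]), ?_, ?_⟩
  · intro δ hδ hδμ
    exact_mod_cast ((hd δ hδ).trans (by simp [f, hδμ]) : (d δ : ℝ) = c δ)
  · have hsum : ∑ δ ∈ P.simples, (d δ : ℝ) = ∑ δ ∈ P.simples, (c δ : ℝ) - 1 := by
      rw [Finset.sum_congr rfl hd]
      simp [f, Finset.sum_sub_distrib, hμ]
    exact_mod_cast (eq_sub_iff_add_eq.mp hsum)

theorem inner_self_pos_of_mem_roots {β : V} (hβ : β ∈ P.roots) : 0 < ⟪β, β⟫ :=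
  real_inner_self_pos.mpr (P.root_ne_zero β hβ)

theorem cpair_eq_one_of_inner_pos (hSL : P.SimplyLaced) {β γ : V} (hβ : β ∈ P.roots)
    (hγ : γ ∈ P.roots) (hne : β ≠ γ) (hpos : 0 < ⟪β, γ⟫) : cpair β γ = 1 := by
  obtain ⟨n, hn⟩ := P.pairing_int β hβ γ hγ
  have hγγ := P.inner_self_pos_of_mem_roots hγ
  have hlt := real_inner_lt_inner_self_of_ne hne (hSL β hβ γ hγ)
  have h0 : (0 : ℝ) < n := by rw [hn]; exact div_pos (by linarith) hγγ
  have h2 : (n : ℝ) < 2 := by rw [hn, cpair, div_lt_iff₀ hγγ]; linarith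
  have hn1 : n = 1 := by
    have h0' : 0 < n := Int.cast_pos.mp h0
    have h2' : n < 2 := by exact_mod_cast h2
    omega
  rw [← hn, hn1, Int.cast_one]

theorem sub_mem_roots_of_inner_pos (hSL : P.SimplyLaced) {β γ : V} (hβ : β ∈ P.roots)
    (hγ : γ ∈ P.roots) (hne : β ≠ γ) (hpos : 0 < ⟪β, γ⟫) : β - γ ∈ P.roots := by
  have h := P.reflect_mem γ hγ β hβ
  rwa [reflVec_apply, P.cpair_eq_one_of_inner_pos hSL hβ hγ hne hpos, one_smul] at h

theorem exists_mem_erase_inner_pos [DecidableEq V] (hSL : P.SimplyLaced) {α β : V}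
    (hα : α ∈ P.simples) (hβ : β ∈ P.roots) (hne : β ≠ α) (c : V → ℕ)
    (hc : β = ∑ δ ∈ P.simples, (c δ : ℝ) • δ) (hcα : c α = 1) :
    ∃ μ ∈ P.simples.erase α, 0 < ⟪β, μ⟫ := by
  by_contra! hI
  have hββ : ⟪β, β⟫ = ∑ δ ∈ P.simples.erase α, (c δ : ℝ) * ⟪β, δ⟫ + ⟪β, α⟫ := by
    calc ⟪β, β⟫ = ⟪β, ∑ δ ∈ P.simples, (c δ : ℝ) • δ⟫ := by rw [← hc]
      _ = _ := by
        rw [inner_sum, ← Finset.sum_erase_add _ _ hα, hcα]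
        simp only [real_inner_smul_right, Nat.cast_one, one_mul]
  have hI_sum : ∑ δ ∈ P.simples.erase α, (c δ : ℝ) * ⟪β, δ⟫ ≤ 0 :=
    Finset.sum_nonpos fun μ hμ => mul_nonpos_of_nonneg_of_nonpos (Nat.cast_nonneg _) (hI μ hμ)
  have hlt := real_inner_lt_inner_self_of_ne hne.symm (hSL α (P.simples_subset hα) β hβ)
  rw [real_inner_comm] at hlt
  linarith

theorem exists_mem_weylOf_erase_apply_eq [DecidableEq V] (hSL : P.SimplyLaced) {α β : V}
    (hα : α ∈ P.simples) (hβ : β ∈ P.roots) (c : V → ℕ)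
    (hc : β = ∑ δ ∈ P.simples, (c δ : ℝ) • δ) (hcα : c α = 1) :
    ∃ u ∈ P.WeylOf (P.simples.erase α), u β = α := by
  induction hn : ∑ δ ∈ P.simples, c δ using Nat.strong_induction_on generalizing β c with
  | _ n ih =>
  by_cases hβα : β = α
  · exact ⟨1, one_mem _, hβα⟩
  obtain ⟨μ, hμI, hβμ⟩ := P.exists_mem_erase_inner_pos hSL hα hβ hβα c hc hcα
  obtain ⟨hμα, hμ⟩ := Finset.mem_erase.mp hμI
  have hβμ_ne : β ≠ μ := hc ▸ P.sum_smul_ne_of_mem_simples hμ hα hμα.symm _ (by simp [hcα])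
  have hroot := P.sub_mem_roots_of_inner_pos hSL hβ (P.simples_subset hμ) hβμ_ne hβμ
  obtain ⟨d, hd, hdc, hheight⟩ :=
    P.exists_coeffs_sub_simple hμ hα hμα.symm c (by omega) (hc ▸ hroot)
  obtain ⟨u, hu, huβ⟩ :=
    ih _ (by omega) hroot d (hc ▸ hd) ((hdc α hα hμα.symm).trans hcα) rfl
  refine ⟨u * reflVec μ, mul_mem hu (Subgroup.subset_closure ⟨μ, hμI, rfl⟩), ?_⟩
  rw [LinearEquiv.mul_apply, reflVec_apply,
    P.cpair_eq_one_of_inner_pos hSL hβ (P.simples_subset hμ) hβμ_ne hβμ, one_smul, huβ]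

theorem inner_sum_smul_of_isFundamentalWeight {α ϖ : V} (hα : α ∈ P.simples)
    (hfw : P.IsFundamentalWeight α ϖ) (f : V → ℝ) :
    ⟪ϖ, ∑ δ ∈ P.simples, f δ • δ⟫ = f α * ⟪ϖ, α⟫ := by
  rw [inner_sum, Finset.sum_eq_single_of_mem α hα, real_inner_smul_right]
  intro δ hδ hδα
  rw [real_inner_smul_right, cpair_eq_zero_iff.mp (hfw.2 δ hδ hδα), mul_zero]

theorem cpair_sum_smul_of_isFundamentalWeight (hSL : P.SimplyLaced) {α ϖ : V}
    (hα : α ∈ P.simples) (hfw : P.IsFundamentalWeight α ϖ) {f : V → ℝ}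
    (hβ : ∑ δ ∈ P.simples, f δ • δ ∈ P.roots) :
    cpair ϖ (∑ δ ∈ P.simples, f δ • δ) = f α := by
  have hαα := P.inner_self_pos_of_mem_roots (P.simples_subset hα)
  have hϖα : 2 * ⟪ϖ, α⟫ = ⟪α, α⟫ := (div_eq_one_iff_eq hαα.ne').mp hfw.1
  rw [cpair, P.inner_sum_smul_of_isFundamentalWeight hα hfw, hSL _ hβ α (P.simples_subset hα),
    div_eq_iff hαα.ne', ← hϖα]
  ring

theorem coeff_eq_one_of_isMinusculeWeight [DecidableEq V] (hSL : P.SimplyLaced) {α ϖ : V}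
    (hα : α ∈ P.simples) (hfw : P.IsFundamentalWeight α ϖ) (hminu : P.IsMinusculeWeight ϖ)
    {β : V} (hβ : β ∈ P.Pos) (hβI : β ∉ P.PosOf (P.simples.erase α)) (c : V → ℕ)
    (hc : β = ∑ δ ∈ P.simples, (c δ : ℝ) • δ) : c α = 1 := by
  have hcα : c α ≠ 0 := fun h0 =>
    hβI ⟨hβ.1, c, by rw [hc, ← Finset.sum_erase_add _ _ hα, h0, Nat.cast_zero, zero_smul,
      add_zero]⟩
  have hle := hminu β hβ
  rw [hc, P.cpair_sum_smul_of_isFundamentalWeight hSL hα hfw (hc ▸ hβ.1)] at hle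
  have : c α ≤ 1 := by exact_mod_cast hle
  omega

end RootSystemData

theorem WeylOf_transitive_on_complement_general [DecidableEq V] (P : RootSystemData V)
    (hSL : P.SimplyLaced)
    (α : V) (hα : α ∈ P.simples) (ϖ : V)
    (hfw : P.IsFundamentalWeight α ϖ) (hminu : P.IsMinusculeWeight ϖ) :
    ∀ β ∈ P.Pos, β ∉ P.PosOf (P.simples.erase α) →
    ∀ γ ∈ P.Pos, γ ∉ P.PosOf (P.simples.erase α) →
    ∃ u ∈ P.WeylOf (P.simples.erase α), u β = γ := by
  have to_simple : ∀ β ∈ P.Pos, β ∉ P.PosOf (P.simples.erase α) →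
      ∃ u ∈ P.WeylOf (P.simples.erase α), u β = α := by
    rintro β hβ hβI
    obtain ⟨c, hc⟩ := hβ.2
    exact P.exists_mem_weylOf_erase_apply_eq hSL hα hβ.1 c hc
      (P.coeff_eq_one_of_isMinusculeWeight hSL hα hfw hminu hβ hβI c hc)
  intro β hβ hβI γ hγ hγI
  obtain ⟨u, hu, huβ⟩ := to_simple β hβ hβI
  obtain ⟨v, hv, hvγ⟩ := to_simple γ hγ hγI
  refine ⟨v⁻¹ * u, mul_mem (inv_mem hv) hu, ?_⟩
  rw [LinearEquiv.mul_apply, LinearEquiv.coe_inv, huβ, ← hvγ, LinearEquiv.symm_apply_apply]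

/-- If `ϖ_α` is minuscule and `I = S \ {α}`, then the parabolic Weyl
group `W_I` acts transitively on `R⁺ \ R⁺_I`. -/
theorem WeylOf_transitive_on_complement [DecidableEq V] (P : RootSystemData V)
    (hSL : P.SimplyLaced) (hirr : P.Irred)
    (α : V) (hα : α ∈ P.simples) (ϖ : V)
    (hfw : P.IsFundamentalWeight α ϖ) (hminu : P.IsMinusculeWeight ϖ) :
    ∀ β ∈ P.Pos, β ∉ P.PosOf (P.simples.erase α) →
    ∀ γ ∈ P.Pos, γ ∉ P.PosOf (P.simples.erase α) →
    ∃ u ∈ P.WeylOf (P.simples.erase α), u β = γ :=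
  WeylOf_transitive_on_complement_general P hSL α hα ϖ hfw hminu
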